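/- arXiv:2601.06586 — 2 statements merged into one kernel-verified Lean document; each statement's English description precedes it below -/
import Mathlib

section
/- Let Φ and φ denote the standard normal CDF and PDF, and fix 0 < α < 1/2 with z_α the α-quantile of the standard normal (so Φ(z_α) = α). Then for every real number x, Φ(z_α + x) ≥ min(1 − α, α + φ(z_α)·x). -/
open MeasureTheory

/-- Standard normal density. -/
noncomputable def stdGaussianPDF (t : ℝ) : ℝ :=
  Real.exp (-t ^ 2 / 2) / Real.sqrt (2 * Real.pi)

/-- Standard normal cumulative distribution function. -/
noncomputable def stdGaussianCDF (z : ℝ) : ℝ :=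
  ∫ t in Set.Iic z, stdGaussianPDF t

/-!
On the half-line `t ≤ 0` the density `φ` is increasing, so `Φ` is convex there and lies above its
tangent line at `z_α ≤ 0`; this gives the bound for `x ≤ 0`. For `0 ≤ x ≤ -2 z_α` every point of
`[z_α, z_α + x]` is at least as close to `0` as `z_α`, so `φ ≥ φ(z_α)` on that interval and `Φ`
again grows at least linearly with slope `φ(z_α)`. For `x ≥ -2 z_α`, monotonicity and symmetry give
`Φ(z_α + x) ≥ Φ(-z_α) = 1 - α`.
-/

open Set ProbabilityTheory

lemma stdGaussianPDF_eq_gaussianPDFReal : stdGaussianPDF = gaussianPDFReal 0 1 := by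
  ext t
  simp [stdGaussianPDF, gaussianPDFReal, div_eq_inv_mul]

lemma stdGaussianPDF_nonneg (t : ℝ) : 0 ≤ stdGaussianPDF t := by
  rw [stdGaussianPDF_eq_gaussianPDFReal]
  exact gaussianPDFReal_nonneg 0 1 t

lemma integrable_stdGaussianPDF : Integrable stdGaussianPDF := by
  rw [stdGaussianPDF_eq_gaussianPDFReal]
  exact integrable_gaussianPDFReal 0 1

lemma integral_stdGaussianPDF : ∫ t, stdGaussianPDF t = 1 := by
  rw [stdGaussianPDF_eq_gaussianPDFReal]
  exact integral_gaussianPDFReal_eq_one 0 one_ne_zero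

lemma stdGaussianPDF_neg (t : ℝ) : stdGaussianPDF (-t) = stdGaussianPDF t := by
  simp [stdGaussianPDF]

lemma stdGaussianPDF_le_of_sq_le {s t : ℝ} (h : t ^ 2 ≤ s ^ 2) :
    stdGaussianPDF s ≤ stdGaussianPDF t := by
  unfold stdGaussianPDF
  gcongr

lemma stdGaussianCDF_sub (a b : ℝ) :
    stdGaussianCDF b - stdGaussianCDF a = ∫ t in a..b, stdGaussianPDF t :=
  intervalIntegral.integral_Iic_sub_Iic integrable_stdGaussianPDF.integrableOn
    integrable_stdGaussianPDF.integrableOn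

lemma monotone_stdGaussianCDF : Monotone stdGaussianCDF := fun _ _ hab =>
  setIntegral_mono_set integrable_stdGaussianPDF.integrableOn
    (.of_forall stdGaussianPDF_nonneg) (Iic_subset_Iic.2 hab).eventuallyLE

lemma stdGaussianCDF_neg (z : ℝ) : stdGaussianCDF (-z) = 1 - stdGaussianCDF z := by
  have h_tail : stdGaussianCDF (-z) = ∫ t in Ioi z, stdGaussianPDF t := by
    have h_reflect : stdGaussianCDF (-z) = ∫ t in Iic (-z), stdGaussianPDF (-t) := by
      simp only [stdGaussianCDF, stdGaussianPDF_neg]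
    rw [h_reflect, integral_comp_neg_Iic, neg_neg]
  have h_split := intervalIntegral.integral_Iic_add_Ioi (b := z)
    integrable_stdGaussianPDF.integrableOn integrable_stdGaussianPDF.integrableOn
  rw [integral_stdGaussianPDF] at h_split
  rw [h_tail, stdGaussianCDF]
  linarith

lemma stdGaussianCDF_zero : stdGaussianCDF 0 = 1 / 2 := by
  have h := stdGaussianCDF_neg 0
  rw [neg_zero] at h
  linarith

lemma stdGaussianCDF_sub_le_of_nonpos {a b : ℝ} (hab : a ≤ b) (hb : b ≤ 0) :
    stdGaussianCDF b - stdGaussianCDF a ≤ stdGaussianPDF b * (b - a) := by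
  rw [stdGaussianCDF_sub, mul_comm, ← smul_eq_mul, ← intervalIntegral.integral_const]
  refine intervalIntegral.integral_mono_on hab
    integrable_stdGaussianPDF.intervalIntegrable intervalIntegrable_const fun t ht => ?_
  exact stdGaussianPDF_le_of_sq_le (by nlinarith [ht.1, ht.2])

lemma mul_le_stdGaussianCDF_sub {a b : ℝ} (hab : a ≤ b) (h : a + b ≤ 0) :
    stdGaussianPDF a * (b - a) ≤ stdGaussianCDF b - stdGaussianCDF a := by
  rw [stdGaussianCDF_sub, mul_comm, ← smul_eq_mul, ← intervalIntegral.integral_const]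
  refine intervalIntegral.integral_mono_on hab
    intervalIntegrable_const integrable_stdGaussianPDF.intervalIntegrable fun t ht => ?_
  exact stdGaussianPDF_le_of_sq_le (by nlinarith [ht.1, ht.2])

theorem stdGaussianCDF_add_ge_min_general
    (α : ℝ) (hα : α < 1 / 2)
    (zα : ℝ) (hz : stdGaussianCDF zα = α) :
    ∀ x : ℝ, min (1 - α) (α + stdGaussianPDF zα * x) ≤ stdGaussianCDF (zα + x) := by
  have hz_nonpos : zα ≤ 0 := by
    by_contra! hpos
    have h := monotone_stdGaussianCDF hpos.le
    rw [stdGaussianCDF_zero, hz] at h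
    linarith
  intro x
  rcases le_total x 0 with hx | hx
  · have := stdGaussianCDF_sub_le_of_nonpos (a := zα + x) (by linarith) hz_nonpos
    exact min_le_of_right_le (by rw [hz] at this; linarith)
  rcases le_total x (-2 * zα) with hx' | hx'
  · have := mul_le_stdGaussianCDF_sub (a := zα) (b := zα + x) (by linarith) (by linarith)
    exact min_le_of_right_le (by rw [hz] at this; linarith)
  · have := monotone_stdGaussianCDF (show -zα ≤ zα + x by linarith)
    exact min_le_of_left_le (by rwa [stdGaussianCDF_neg, hz] at this)

/-- Pointwise lower bound: Φ(z_α + x) ≥ min(1 − α, α + φ(z_α)·x). -/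
theorem stdGaussianCDF_add_ge_min
    (α : ℝ) (hα0 : 0 < α) (hα : α < 1 / 2)
    (zα : ℝ) (hz : stdGaussianCDF zα = α) :
    ∀ x : ℝ, min (1 - α) (α + stdGaussianPDF zα * x) ≤ stdGaussianCDF (zα + x) :=
  stdGaussianCDF_add_ge_min_general α hα zα hz
end

section
/- Let F : ℝ → [0,1] be a continuous cumulative distribution function and X a random variable with law given by F. Then the random variable F(X) is uniformly distributed on [0,1], i.e., for all α ∈ [0,1], P(F(X) ≤ α) = α. -/
/-! For a continuous monotone `F`, the sublevel set `{F ≤ α}` is a closed lower set, hence a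
half-line `(-∞, s]` with `s` its supremum, and the intermediate value theorem forces `F s = α`.
Then `P(F(X) ≤ α) = P(X ≤ s) = F s = α`. The remaining cases, `α = 1` and `α` below every value
of `F` (so `α = 0`), give the whole space and the empty set. -/

open MeasureTheory Set Filter Topology

section

variable {β γ : Type*} [ConditionallyCompleteLinearOrder β] [TopologicalSpace β] [OrderTopology β]
  [LinearOrder γ] [TopologicalSpace γ] [OrderClosedTopology γ] {f : β → γ} {a : γ}

theorem Monotone.preimage_Iic_eq_Iic_csSup (hf : Monotone f) (hc : Continuous f)
    (hne : (f ⁻¹' Iic a).Nonempty) (hbdd : BddAbove (f ⁻¹' Iic a)) :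
    f ⁻¹' Iic a = Iic (sSup (f ⁻¹' Iic a)) := by
  rw [← lowerClosure_eq_Iic_csSup hne hbdd (isClosed_Iic.preimage hc),
    (isLowerSet_Iic a).preimage hf |>.lowerClosure]

theorem Monotone.exists_apply_eq_and_preimage_Iic_eq_Iic [DenselyOrdered β] (hf : Monotone f)
    (hc : Continuous f) (hlow : ∃ t, f t ≤ a) (hhigh : ∃ T, a < f T) :
    ∃ s, f s = a ∧ f ⁻¹' Iic a = Iic s := by
  obtain ⟨T, hT⟩ := hhigh
  have hbdd : BddAbove (f ⁻¹' Iic a) := ⟨T, fun t ht => (hf.reflect_lt (ht.trans_lt hT)).le⟩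
  have hpre := hf.preimage_Iic_eq_Iic_csSup hc hlow hbdd
  set s := sSup (f ⁻¹' Iic a)
  have hfs : f s ≤ a := (hpre.ge (mem_Iic.2 le_rfl) : s ∈ f ⁻¹' Iic a)
  refine ⟨s, hfs.antisymm (not_lt.1 fun hlt => ?_), hpre⟩
  have hsT : s ≤ T := not_lt.1 fun hTs => hT.not_ge (hpre.ge hTs.le)
  obtain ⟨c, hcI, hfc⟩ := intermediate_value_Icc hsT hc.continuousOn ⟨hlt.le, hT.le⟩
  have hcs : c ≤ s := hpre.le hfc.le
  exact hlt.ne (hcs.antisymm hcI.1 ▸ hfc)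

end

theorem probability_integral_transform_general
    {Ω : Type*} [MeasurableSpace Ω] (μ : Measure Ω) [IsProbabilityMeasure μ]
    (X : Ω → ℝ)
    (F : ℝ → ℝ) (hFmono : Monotone F) (hFcont : Continuous F)
    (hFbot : Filter.Tendsto F Filter.atBot (nhds 0))
    (hFtop : Filter.Tendsto F Filter.atTop (nhds 1))
    (hFlaw : ∀ t : ℝ, (μ {ω | X ω ≤ t}).toReal = F t) :
    ∀ α : ℝ, 0 ≤ α → α ≤ 1 → (μ {ω | F (X ω) ≤ α}).toReal = α := by
  intro α hα0 hα1
  rcases hα1.eq_or_lt with rfl | hα1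
  · simp [hFmono.ge_of_tendsto hFtop]
  by_cases hlow : ∃ t, F t ≤ α
  · obtain ⟨s, hFs, hpre⟩ := hFmono.exists_apply_eq_and_preimage_Iic_eq_Iic hFcont hlow
      (hFtop.eventually (eventually_gt_nhds hα1)).exists
    have hset : {ω | F (X ω) ≤ α} = {ω | X ω ≤ s} := congrArg (X ⁻¹' ·) hpre
    rw [hset, hFlaw, hFs]
  · push Not at hlow
    obtain rfl : α = 0 := (ge_of_tendsto hFbot (.of_forall fun t => (hlow t).le)).antisymm hα0
    have hset : {ω | F (X ω) ≤ 0} = ∅ := eq_empty_of_forall_notMem fun ω => (hlow (X ω)).not_ge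
    simp [hset]

/-- Probability integral transform: if F is the continuous CDF of X, then F(X) is
uniformly distributed on [0,1]. -/
theorem probability_integral_transform
    {Ω : Type*} [MeasurableSpace Ω] (μ : Measure Ω) [IsProbabilityMeasure μ]
    (X : Ω → ℝ) (hX : Measurable X)
    (F : ℝ → ℝ) (hFmono : Monotone F) (hFcont : Continuous F)
    (hFbot : Filter.Tendsto F Filter.atBot (nhds 0))
    (hFtop : Filter.Tendsto F Filter.atTop (nhds 1))
    (hFlaw : ∀ t : ℝ, (μ {ω | X ω ≤ t}).toReal = F t) :
    ∀ α : ℝ, 0 ≤ α → α ≤ 1 → (μ {ω | F (X ω) ≤ α}).toReal = α :=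
  probability_integral_transform_general μ X F hFmono hFcont hFbot hFtop hFlaw
end
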